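/- arXiv:1102.2866 — 4 statements merged into one kernel-verified Lean document; each statement's English description precedes it below -/
import Mathlib

section
/- The relation ≤ defined on subgroups of a free group F equipped with compatible peripheral structures—where (H,[u]) ≤ (K,[v]) iff (1) the index of H ∩ K in H is finite, and (2) if additionally the index of H ∩ K in K is finite then the peripheral structure induced on H ∩ K by [u] is compatible with [v]—is a preorder (reflexive and transitive). -/
/-- The conjugate `g C g⁻¹` of a subgroup `C`. -/
def conjSub {G : Type*} [Group G] (g : G) (C : Subgroup G) : Subgroup G :=
  C.map (MulAut.conj g).toMonoidHom

/-- `C` is a maximal cyclic subgroup of the subgroup `H`: `C ≤ H` is cyclic and not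
properly contained in any cyclic subgroup of `H`. -/
def IsMaxCyclicIn {G : Type*} [Group G] (H C : Subgroup G) : Prop :=
  C ≤ H ∧ (∃ x : G, C = Subgroup.zpowers x) ∧
    ∀ C' : Subgroup G, C' ≤ H → (∃ x : G, C' = Subgroup.zpowers x) → C ≤ C' → C = C'

/-- A peripheral structure on a subgroup `H`: a set of pairwise non-conjugate (in `H`)
maximal cyclic subgroups of `H`. -/
def IsPeripheralStructure {G : Type*} [Group G] (H : Subgroup G) (P : Set (Subgroup G)) :
    Prop :=
  (∀ C ∈ P, IsMaxCyclicIn H C) ∧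
    ∀ C ∈ P, ∀ C' ∈ P, (∃ h ∈ H, conjSub h C = C') → C = C'

/-- The pullback to a subgroup `H ≤ K` of a peripheral structure `P` on `K`: the
(closure under `H`-conjugacy of the) set of nontrivial subgroups `H ∩ gCg⁻¹` for
`C ∈ P`, `g ∈ K`. -/
def pullbackStruct {G : Type*} [Group G] (K : Subgroup G) (P : Set (Subgroup G))
    (H : Subgroup G) : Set (Subgroup G) :=
  {D | D ≠ ⊥ ∧ ∃ C ∈ P, ∃ g ∈ K, D = H ⊓ conjSub g C}

/-- A pair `(H, [u])`: a subgroup `H` of `F` together with a peripheral structure on `H`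
compatible with the fixed peripheral structure `W` on `F` (i.e. contained in the pullback
of `W` to `H`). -/
structure PPair (G : Type*) [Group G] (W : Set (Subgroup G)) where
  H : Subgroup G
  U : Set (Subgroup G)
  periph : IsPeripheralStructure H U
  compat : U ⊆ pullbackStruct ⊤ W H

/-- `(H,[u]) ≤ (K,[v])` iff `|H : H ∩ K| < ∞`, and whenever also `|K : H ∩ K| < ∞`,
the peripheral structure induced on `H ∩ K` by `[u]` is compatible with `[v]`
(i.e. the pullback of `[u]` to `H ∩ K` is contained in the pullback of `[v]`). -/
def ple {G : Type*} [Group G] {W : Set (Subgroup G)} (P Q : PPair G W) : Prop :=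
  Q.H.relIndex P.H ≠ 0 ∧
    (P.H.relIndex Q.H ≠ 0 →
      pullbackStruct P.H P.U (P.H ⊓ Q.H) ⊆ pullbackStruct Q.H Q.U (P.H ⊓ Q.H))

/-! Reflexivity is immediate. For transitivity `(H,[u]) ≤ (K,[v]) ≤ (L,[w'])`, take
`x ≠ 1` in a member `(H ∩ L) ∩ gCg⁻¹` of the pullback of `[u]`. Some power `y = xⁿ` lies in `K`,
and following the two compatibilities through `H ∩ K` and `K ∩ L` produces `g₂C₂g₂⁻¹ ∋ y` with
`C₂ ∈ [w']`, `g₂ ∈ L`. Both `gCg⁻¹` and `g₂C₂g₂⁻¹` are traces `H ∩ M`, `L ∩ M₂` of maximal cyclic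
subgroups of `F` containing `y`, so `M = M₂` and the two members agree on `H ∩ L`. Indeed, if
`aᵖ = b^q ≠ 1`, then `⟨a, b⟩` is free (Nielsen–Schreier) with abelianization of rank at most
one, hence cyclic. -/

open scoped Pointwise

section Conjugation

variable {G : Type*} [Group G]

theorem conjSub_eq_smul (g : G) (C : Subgroup G) : conjSub g C = MulAut.conj g • C := rfl

theorem MulAut.smul_zpowers (a : MulAut G) (x : G) :
    a • Subgroup.zpowers x = Subgroup.zpowers (a x) :=
  MonoidHom.map_zpowers _ x

theorem IsMaxCyclicIn.smul {H C : Subgroup G} (h : IsMaxCyclicIn H C) (a : MulAut G) :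
    IsMaxCyclicIn (a • H) (a • C) := by
  obtain ⟨hCH, ⟨x, rfl⟩, hmax⟩ := h
  refine ⟨Subgroup.pointwise_smul_le_pointwise_smul_iff.mpr hCH, ⟨a x, a.smul_zpowers x⟩, ?_⟩
  rintro C' hC'H ⟨w, rfl⟩ hxw
  rw [Subgroup.subset_pointwise_smul_iff] at hC'H
  rw [Subgroup.pointwise_smul_subset_iff] at hxw
  rw [hmax _ hC'H ⟨a⁻¹ w, a⁻¹.smul_zpowers w⟩ hxw, smul_inv_smul]

theorem IsMaxCyclicIn.conjSub_top {C : Subgroup G} (h : IsMaxCyclicIn ⊤ C) (g : G) :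
    IsMaxCyclicIn ⊤ (conjSub g C) := by
  rw [conjSub_eq_smul]
  simpa only [Subgroup.conj_smul_eq_self_of_mem (Subgroup.mem_top g)] using h.smul (MulAut.conj g)

end Conjugation

section PowerRelation

variable {G : Type*} [Group G] {A B : G} {p q : ℤ}

theorem MonoidHom.eq_one_of_map_eq_one_of_zpow_eq_zpow (hgen : Subgroup.closure {A, B} = ⊤)
    (hAB : A ^ p = B ^ q) (hq : q ≠ 0) {φ : G →* Multiplicative ℤ} (hA : φ A = 1) : φ = 1 := by
  have hB : φ B = 1 := by
    rw [← IsMulTorsionFree.zpow_eq_one_iff_left hq, ← map_zpow, ← hAB, map_zpow, hA, one_zpow]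
  refine MonoidHom.eq_of_eqOn_dense hgen ?_
  rintro x (rfl | rfl) <;> simpa

theorem IsFreeGroup.subsingleton_generators_of_zpow_eq_zpow [IsFreeGroup G]
    (hgen : Subgroup.closure {A, B} = ⊤) (hAB : A ^ p = B ^ q) (hq : q ≠ 0) :
    Subsingleton (IsFreeGroup.Generators G) := by
  classical
  refine ⟨fun s t => by_contra fun hst => ?_⟩
  let basisVector (u : IsFreeGroup.Generators G) : IsFreeGroup.Generators G → Multiplicative ℤ :=
    Pi.mulSingle u (Multiplicative.ofAdd 1)
  let coord (u : IsFreeGroup.Generators G) : G →* Multiplicative ℤ :=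
    IsFreeGroup.lift (basisVector u)
  have coord_of (u v : IsFreeGroup.Generators G) : coord u (IsFreeGroup.of v) = basisVector u v :=
    IsFreeGroup.lift_of _ _
  -- `ψ` kills `A`, hence everything; evaluated at `of s` this says that `coord t` kills `A`.
  let ψ := coord s ^ (coord t A).toAdd / coord t ^ (coord s A).toAdd
  have hψ : ψ = 1 := MonoidHom.eq_one_of_map_eq_one_of_zpow_eq_zpow hgen hAB hq <| by
    rw [MonoidHom.div_apply, div_eq_one]
    apply Multiplicative.toAdd.injective
    simp [mul_comm]
  have htA : coord t A = 1 := by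
    have := DFunLike.congr_fun hψ (IsFreeGroup.of s)
    simpa [ψ, coord_of, basisVector, Pi.mulSingle_eq_of_ne hst] using this
  have := DFunLike.congr_fun (MonoidHom.eq_one_of_map_eq_one_of_zpow_eq_zpow hgen hAB hq htA)
    (IsFreeGroup.of t)
  simp [coord_of, basisVector] at this

theorem IsFreeGroup.isCyclic_of_zpow_eq_zpow [IsFreeGroup G]
    (hgen : Subgroup.closure {A, B} = ⊤) (hAB : A ^ p = B ^ q) (hq : q ≠ 0) : IsCyclic G := by
  have := subsingleton_generators_of_zpow_eq_zpow hgen hAB hq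
  rcases isEmpty_or_nonempty (IsFreeGroup.Generators G) with _ | ⟨⟨s⟩⟩
  · have : Subsingleton G := (IsFreeGroup.toFreeGroup G).toEquiv.subsingleton
    infer_instance
  · have : Unique (IsFreeGroup.Generators G) := uniqueOfSubsingleton s
    exact isCyclic_of_surjective (IsFreeGroup.toFreeGroup G).symm.toMonoidHom
      (IsFreeGroup.toFreeGroup G).symm.surjective

theorem IsFreeGroup.exists_mem_zpowers_of_zpow_eq_zpow [IsFreeGroup G] {a b : G}
    (hab : a ^ p = b ^ q) (hq : q ≠ 0) :
    ∃ c ∈ Subgroup.closure {a, b}, a ∈ Subgroup.zpowers c ∧ b ∈ Subgroup.zpowers c := by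
  set K := Subgroup.closure {a, b}
  let A : K := ⟨a, Subgroup.subset_closure (by simp)⟩
  let B : K := ⟨b, Subgroup.subset_closure (by simp)⟩
  have hgen : Subgroup.closure {A, B} = ⊤ := by
    convert Subgroup.closure_closure_coe_preimage (k := {a, b})
    ext ⟨x, hx⟩
    simp [A, B, Subtype.ext_iff]
  have hAB : A ^ p = B ^ q := Subtype.ext (by simpa using hab)
  obtain ⟨c, hc⟩ := (isCyclic_of_zpow_eq_zpow hgen hAB hq).exists_generator
  have hmem (x : K) : (x : G) ∈ Subgroup.zpowers (c : G) := by
    simpa [MonoidHom.map_zpowers] using Subgroup.mem_map_of_mem K.subtype (hc x)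
  exact ⟨c, c.2, hmem A, hmem B⟩

theorem IsMaxCyclicIn.eq_of_mem_of_mem [IsFreeGroup G] {H M₁ M₂ : Subgroup G}
    (h₁ : IsMaxCyclicIn H M₁) (h₂ : IsMaxCyclicIn H M₂) {z : G} (hz : z ≠ 1) (hz₁ : z ∈ M₁)
    (hz₂ : z ∈ M₂) : M₁ = M₂ := by
  obtain ⟨hM₁H, ⟨a, rfl⟩, hmax₁⟩ := h₁
  obtain ⟨hM₂H, ⟨b, rfl⟩, hmax₂⟩ := h₂
  obtain ⟨p, rfl⟩ := hz₁
  obtain ⟨q, hq⟩ := hz₂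
  have hq0 : q ≠ 0 := by rintro rfl; exact hz (by simpa using hq.symm)
  obtain ⟨c, hcab, hac, hbc⟩ := IsFreeGroup.exists_mem_zpowers_of_zpow_eq_zpow hq.symm hq0
  have habH : Subgroup.closure {a, b} ≤ H := (Subgroup.closure_le _).mpr <|
    Set.insert_subset (hM₁H (Subgroup.mem_zpowers a))
      (Set.singleton_subset_iff.mpr (hM₂H (Subgroup.mem_zpowers b)))
  have hcH : Subgroup.zpowers c ≤ H := Subgroup.zpowers_le.mpr (habH hcab)
  rw [hmax₁ _ hcH ⟨c, rfl⟩ (Subgroup.zpowers_le.mpr hac),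
    hmax₂ _ hcH ⟨c, rfl⟩ (Subgroup.zpowers_le.mpr hbc)]

end PowerRelation

section PeripheralStructures

variable {G : Type*} [Group G] {W : Set (Subgroup G)}

theorem PPair.exists_conjSub_eq_inf_isMaxCyclicIn (hW : ∀ C ∈ W, IsMaxCyclicIn ⊤ C)
    (P : PPair G W) {C : Subgroup G} (hC : C ∈ P.U) {g : G} (hg : g ∈ P.H) :
    ∃ M, IsMaxCyclicIn ⊤ M ∧ conjSub g C = P.H ⊓ M := by
  obtain ⟨-, C₀, hC₀, h, -, rfl⟩ := P.compat hC
  refine ⟨conjSub (g * h) C₀, (hW C₀ hC₀).conjSub_top _, ?_⟩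
  simp only [conjSub_eq_smul, Subgroup.smul_inf, Subgroup.conj_smul_eq_self_of_mem hg, map_mul,
    mul_smul]

theorem exists_mem_conjSub_of_pullbackStruct_subset {K K' H : Subgroup G} {U U' : Set (Subgroup G)}
    (hsub : pullbackStruct K U H ⊆ pullbackStruct K' U' H) {y : G} (hy : y ≠ 1) (hyH : y ∈ H)
    {C : Subgroup G} (hC : C ∈ U) {g : G} (hg : g ∈ K) (hyC : y ∈ conjSub g C) :
    ∃ C' ∈ U', ∃ g' ∈ K', y ∈ conjSub g' C' := by
  have hne : H ⊓ conjSub g C ≠ ⊥ := fun h => hy (Subgroup.mem_bot.mp (h ▸ ⟨hyH, hyC⟩))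
  obtain ⟨-, C', hC', g', hg', heq⟩ := hsub ⟨hne, C, hC, g, hg, rfl⟩
  exact ⟨C', hC', g', hg', (heq ▸ ⟨hyH, hyC⟩ : y ∈ H ⊓ conjSub g' C').2⟩

theorem ple_refl (P : PPair G W) : ple P P :=
  ⟨by simp [Subgroup.relIndex_self], fun _ => subset_rfl⟩

end PeripheralStructures

theorem pullbackStruct_subset_trans {α : Type*} {W : Set (Subgroup (FreeGroup α))}
    (hW : ∀ C ∈ W, IsMaxCyclicIn ⊤ C) {P Q R : PPair (FreeGroup α) W}
    (hPQ : Q.H.relIndex P.H ≠ 0)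
    (hPQ' : pullbackStruct P.H P.U (P.H ⊓ Q.H) ⊆ pullbackStruct Q.H Q.U (P.H ⊓ Q.H))
    (hQR' : pullbackStruct Q.H Q.U (Q.H ⊓ R.H) ⊆ pullbackStruct R.H R.U (Q.H ⊓ R.H)) :
    pullbackStruct P.H P.U (P.H ⊓ R.H) ⊆ pullbackStruct R.H R.U (P.H ⊓ R.H) := by
  rintro D ⟨hD, C, hC, g, hg, rfl⟩
  obtain ⟨x, ⟨⟨hxP, hxR⟩, hxC⟩, hx⟩ := (Subgroup.bot_or_exists_ne_one _).resolve_left hD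
  obtain ⟨n, hn, -, hyQ, hyP⟩ := Subgroup.exists_pow_mem_of_relIndex_ne_zero hPQ hxP
  have hy : x ^ n ≠ 1 := (pow_eq_one_iff_left hn.ne').not.mpr hx
  obtain ⟨C₁, hC₁, g₁, hg₁, hyC₁⟩ :=
    exists_mem_conjSub_of_pullbackStruct_subset hPQ' hy ⟨hyP, hyQ⟩ hC hg (pow_mem hxC n)
  obtain ⟨C₂, hC₂, g₂, hg₂, hyC₂⟩ :=
    exists_mem_conjSub_of_pullbackStruct_subset hQR' hy ⟨hyQ, pow_mem hxR n⟩ hC₁ hg₁ hyC₁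
  obtain ⟨M, hM, hCM⟩ := P.exists_conjSub_eq_inf_isMaxCyclicIn hW hC hg
  obtain ⟨M₂, hM₂, hC₂M⟩ := R.exists_conjSub_eq_inf_isMaxCyclicIn hW hC₂ hg₂
  have hMM : M = M₂ := hM.eq_of_mem_of_mem hM₂ hy (hCM ▸ pow_mem hxC n).2 (hC₂M ▸ hyC₂).2
  refine ⟨hD, C₂, hC₂, g₂, hg₂, ?_⟩
  rw [hCM, hC₂M, hMM]
  simp only [inf_comm, inf_left_comm, inf_idem, inf_left_idem]

theorem ple_trans {α : Type*} {W : Set (Subgroup (FreeGroup α))}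
    (hW : ∀ C ∈ W, IsMaxCyclicIn ⊤ C) {P Q R : PPair (FreeGroup α) W} (hPQ : ple P Q)
    (hQR : ple Q R) : ple P R := by
  obtain ⟨hPQ, hPQ'⟩ := hPQ
  obtain ⟨hQR, hQR'⟩ := hQR
  refine ⟨Subgroup.relIndex_ne_zero_trans hQR hPQ, fun hRP => ?_⟩
  exact pullbackStruct_subset_trans hW hPQ (hPQ' (Subgroup.relIndex_ne_zero_trans hRP hQR))
    (hQR' (Subgroup.relIndex_ne_zero_trans hPQ hRP))

/-- The relation `≤` on subgroups of a free group `F` equipped with compatible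
peripheral structures is a preorder: reflexive and transitive. -/
theorem stmt_2 {α : Type*} (W : Set (Subgroup (FreeGroup α)))
    (hW : IsPeripheralStructure ⊤ W) :
    Reflexive (ple (G := FreeGroup α) (W := W)) ∧
    Transitive (ple (G := FreeGroup α) (W := W)) :=
  ⟨ple_refl, fun _ _ _ => ple_trans hW.1⟩
end

section
/- If w is a finite multiword in a free group F and H is a finitely generated subgroup of F, then the pullback peripheral structure of [w] to H is finite. -/
/-!
Let `H` be generated by a finite set `S`. Every prefix of the reduced word of an element of `H`
lies in one of finitely many right cosets `H e`: those of the prefixes of the words in `S`.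
If `c sⁿ c⁻¹ ∈ H` with `s` cyclically reduced, then for large `N` the reduced word of `c s^N c⁻¹`
begins with the reduced word of `c sˡ`, `l = |c|`, so `c ∈ H e s⁻ˡ` for one of these `e`. Hence
only finitely many double cosets `H g ⟨y⟩` satisfy `H ∩ g⟨y⟩g⁻¹ ≠ 1`, and each of them contributes
one `H`-conjugacy class to the pullback. Finally, a generator of a cyclic subgroup containing
`x ≠ 1` is no longer than `x`, so only finitely many cyclic subgroups meet `w`.
-/

open List

section

variable {G : Type*} [Group G]

theorem conjSub_zpowers (g y : G) :
    conjSub g (Subgroup.zpowers y) = Subgroup.zpowers (g * y * g⁻¹) :=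
  MonoidHom.map_zpowers _ _

theorem conjSub_mul (a b : G) (C : Subgroup G) :
    conjSub (a * b) C = conjSub a (conjSub b C) := by
  rw [conjSub, conjSub, conjSub, Subgroup.map_map, map_mul]
  rfl

theorem conjSub_eq_self_of_mem {C : Subgroup G} {g : G} (hg : g ∈ C) : conjSub g C = C :=
  Subgroup.mem_normalizer_iff_map_conj_eq.mp (Subgroup.le_normalizer hg)

theorem conjSub_inf (g : G) (A B : Subgroup G) :
    conjSub g (A ⊓ B) = conjSub g A ⊓ conjSub g B :=
  Subgroup.map_inf A B _ (MulAut.conj g).injective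

theorem conjSub_inv_inf_conjSub_mul_mul {H C : Subgroup G} {h g c : G} (hh : h ∈ H)
    (hc : c ∈ C) : conjSub h⁻¹ (H ⊓ conjSub (h * g * c) C) = H ⊓ conjSub g C := by
  rw [conjSub_inf, conjSub_eq_self_of_mem (H.inv_mem hh), ← conjSub_mul,
    show h⁻¹ * (h * g * c) = g * c by group, conjSub_mul, conjSub_eq_self_of_mem hc]

theorem Subgroup.pow_natAbs_mem {H : Subgroup G} {x : G} {k : ℤ} (h : x ^ k ∈ H) :
    x ^ k.natAbs ∈ H := by
  rcases Int.natAbs_eq k with hk | hk <;> rw [hk] at h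
  · rwa [zpow_natCast] at h
  · rwa [zpow_neg, zpow_natCast, inv_mem_iff] at h

end

namespace FreeGroup

variable {α : Type*} [DecidableEq α]

theorem reduce_append_eq_of_isReduced {L M : List (α × Bool)} (hL : IsReduced L)
    (hM : IsReduced M) :
    ∃ U C V, L = U ++ C ∧ M = invRev C ++ V ∧ reduce (L ++ M) = U ++ V := by
  induction L with
  | nil => exact ⟨[], [], M, rfl, rfl, hM.reduce_eq⟩
  | cons a L ih =>
    obtain ⟨U, C, V, rfl, rfl, hred⟩ := ih (hL.infix (suffix_cons a _).isInfix)
    rw [cons_append, reduce.cons, hred]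
    cases U with
    | cons b U =>
      have hab : ¬(a.1 = b.1 ∧ a.2 = !b.2) := by
        rintro ⟨h1, h2⟩
        have := (isReduced_cons_cons.mp hL).1 h1
        cases b.2 <;> simp_all
      exact ⟨a :: b :: U, C, V, rfl, rfl, by simp [hab]⟩
    | nil =>
      cases V with
      | nil => exact ⟨[a], C, [], rfl, by simp, rfl⟩
      | cons b V =>
        by_cases hab : a.1 = b.1 ∧ a.2 = !b.2
        · refine ⟨[], a :: C, V, rfl, ?_, by simp [hab]⟩
          obtain ⟨a1, a2⟩ := a
          obtain ⟨b1, b2⟩ := b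
          simp_all [invRev]
        · exact ⟨[a], C, b :: V, rfl, rfl, by simp [hab]⟩

theorem exists_toWord_mul_eq (x y : FreeGroup α) :
    ∃ U C V, x.toWord = U ++ C ∧ y.toWord = invRev C ++ V ∧ (x * y).toWord = U ++ V := by
  rw [toWord_mul]
  exact reduce_append_eq_of_isReduced isReduced_toWord isReduced_toWord

theorem prefix_toWord_mul {x y : FreeGroup α} {p : List (α × Bool)}
    (hp : p <+: (x * y).toWord) :
    p <+: x.toWord ∨ ∃ q, q <+: y.toWord ∧ mk p = x * mk q := by
  obtain ⟨U, C, V, hx, hy, hxy⟩ := exists_toWord_mul_eq x y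
  rw [hxy] at hp
  rcases le_total p.length U.length with hle | hle
  · exact .inl ((prefix_of_prefix_length_le hp (prefix_append U V) hle).trans
      (hx ▸ prefix_append U C))
  · obtain ⟨r, rfl⟩ := prefix_of_prefix_length_le (prefix_append U V) hp hle
    refine .inr ⟨invRev C ++ r,
      hy ▸ (prefix_append_right_inj _).mpr ((prefix_append_right_inj U).mp hp), ?_⟩
    rw [← mk_toWord (x := x), hx, ← mul_mk, ← mul_mk, ← mul_mk, ← inv_mk]
    group

theorem prefix_toWord_inv {x : FreeGroup α} {p : List (α × Bool)} (hp : p <+: x⁻¹.toWord) :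
    ∃ q, q <+: x.toWord ∧ mk p = x⁻¹ * mk q := by
  obtain ⟨t, ht⟩ := hp
  rw [toWord_inv] at ht
  have hx : x.toWord = invRev t ++ invRev p := by rw [← invRev_append, ht, invRev_invRev]
  refine ⟨invRev t, hx ▸ prefix_append _ _, ?_⟩
  rw [← mk_toWord (x := x), hx, ← mul_mk, ← inv_mk, ← inv_mk]
  group

theorem prefix_toWord_mul_of_prefix {x y : FreeGroup α} {p : List (α × Bool)}
    (hp : p <+: x.toWord) (hlen : p.length + y.toWord.length ≤ x.toWord.length) :
    p <+: (x * y).toWord := by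
  obtain ⟨U, C, V, hx, hy, hxy⟩ := exists_toWord_mul_eq x y
  have hU : p.length ≤ U.length := by
    have := congrArg length hx
    have := congrArg length hy
    simp only [length_append, invRev_length] at *
    omega
  rw [hxy]
  exact (prefix_of_prefix_length_le hp (hx ▸ prefix_append U C) hU).trans (prefix_append U V)

theorem toWord_mul_mk_prefix_toWord_mul {x y : FreeGroup α} {q : List (α × Bool)}
    (hq : q <+: y.toWord) (hlen : x.toWord.length ≤ q.length) :
    (x * mk q).toWord <+: (x * y).toWord := by
  obtain ⟨U, C, V, hx, hy, hxy⟩ := exists_toWord_mul_eq x y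
  have hC : invRev C <+: q := by
    refine prefix_of_prefix_length_le (hy ▸ prefix_append _ _) hq ?_
    have := congrArg length hx
    simp only [length_append, invRev_length] at *
    omega
  obtain ⟨r, rfl⟩ := hC
  have hr : U ++ r <+: (x * y).toWord :=
    hxy ▸ (prefix_append_right_inj U).mpr ((prefix_append_right_inj _).mp (hy ▸ hq))
  have hmk : x * mk (invRev C ++ r) = mk (U ++ r) := by
    rw [← mk_toWord (x := x), hx, ← mul_mk, ← mul_mk, ← mul_mk, ← inv_mk]
    group
  rw [hmk, toWord_mk, (isReduced_toWord.infix hr.isInfix).reduce_eq]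
  exact hr

theorem norm_le_norm_pow (y : FreeGroup α) {n : ℕ} (hn : n ≠ 0) : norm y ≤ norm (y ^ n) := by
  have h := congrArg length (reduceCyclically.conj_conjugator_reduceCyclically y.toWord)
  rw [norm, norm, toWord_pow, reduceCyclically.reduce_flatten_replicate isReduced_toWord,
    if_neg hn, ← h]
  simp only [length_append, length_flatten, map_replicate, sum_replicate, invRev_length,
    smul_eq_mul]
  have := Nat.le_mul_of_pos_left (reduceCyclically y.toWord).length (Nat.pos_of_ne_zero hn)
  omega

theorem norm_le_norm_zpow (y : FreeGroup α) {k : ℤ} (hk : k ≠ 0) : norm y ≤ norm (y ^ k) := by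
  have hn : k.natAbs ≠ 0 := Int.natAbs_ne_zero.mpr hk
  rcases Int.natAbs_eq k with h | h <;> rw [h]
  · rw [zpow_natCast]
    exact norm_le_norm_pow y hn
  · rw [zpow_neg, zpow_natCast, norm_inv_eq]
    exact norm_le_norm_pow y hn

def PrefixCosetReps (H : Subgroup (FreeGroup α)) (E : Finset (FreeGroup α)) : Prop :=
  ∀ h ∈ H, ∀ p, p <+: h.toWord → ∃ e ∈ E, mk p * e⁻¹ ∈ H

theorem exists_prefixCosetReps_of_fg {H : Subgroup (FreeGroup α)} (hH : H.FG) :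
    ∃ E, PrefixCosetReps H E := by
  obtain ⟨S, rfl⟩ := hH
  refine ⟨insert 1 ((S.biUnion fun a => a.toWord.inits.toFinset).image mk), fun h hh => ?_⟩
  induction hh using Subgroup.closure_induction with
  | mem a ha =>
    intro p hp
    refine ⟨mk p, Finset.mem_insert_of_mem (Finset.mem_image_of_mem _ ?_), ?_⟩
    · exact Finset.mem_biUnion.mpr ⟨a, ha, by simpa using hp⟩
    · rw [mul_inv_cancel]
      exact one_mem _
  | one =>
    intro p hp
    rw [toWord_one, prefix_nil] at hp
    subst hp
    exact ⟨1, Finset.mem_insert_self _ _, by simp [← one_eq_mk]⟩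
  | mul x y hx _ ihx ihy =>
    intro p hp
    rcases prefix_toWord_mul hp with hp | ⟨q, hq, hpq⟩
    · exact ihx p hp
    · obtain ⟨e, he, hqe⟩ := ihy q hq
      exact ⟨e, he, by rw [hpq, mul_assoc]; exact mul_mem hx hqe⟩
  | inv x hx ihx =>
    intro p hp
    obtain ⟨q, hq, hpq⟩ := prefix_toWord_inv hp
    obtain ⟨e, he, hqe⟩ := ihx q hq
    exact ⟨e, he, by rw [hpq, mul_assoc]; exact mul_mem (inv_mem hx) hqe⟩

theorem exists_eq_mul_mul_zpow_of_conj_pow_mem {H : Subgroup (FreeGroup α)}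
    {E : Finset (FreeGroup α)} (hE : PrefixCosetReps H E)
    {s c : FreeGroup α} (hs : IsCyclicallyReduced s.toWord) (hs1 : s ≠ 1) {n : ℕ} (hn : n ≠ 0)
    (hmem : c * s ^ n * c⁻¹ ∈ H) : ∃ e ∈ E, ∃ h ∈ H, ∃ j : ℤ, c = h * e * s ^ j := by
  set ℓ := c.toWord.length
  set N := n * (4 * ℓ)
  have hpow (m : ℕ) : (s ^ m).toWord = (replicate m s.toWord).flatten := by
    rw [toWord_pow, (hs.flatten_replicate m).isReduced.reduce_eq]
  have hlen (m : ℕ) : (s ^ m).toWord.length = m * s.toWord.length := by simp [hpow]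
  have hS : 1 ≤ s.toWord.length := length_pos_iff.mpr (mt toWord_eq_nil_iff.mp hs1)
  have h4ℓ : 4 * ℓ ≤ N := Nat.le_mul_of_pos_left _ (Nat.pos_of_ne_zero hn)
  have hN : c * s ^ N * c⁻¹ ∈ H := by
    rw [pow_mul, ← conj_pow]
    exact H.pow_mem hmem _
  have h1 : (c * s ^ ℓ).toWord <+: (c * s ^ N).toWord := by
    have hpre : (s ^ ℓ).toWord <+: (s ^ N).toWord := by
      rw [hpow, hpow, ← Nat.add_sub_cancel' (by omega : ℓ ≤ N), replicate_add, flatten_append]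
      exact prefix_append _ _
    have := toWord_mul_mk_prefix_toWord_mul (x := c) hpre
      (by rw [hlen]; exact Nat.le_mul_of_pos_right _ hS)
    rwa [mk_toWord] at this
  have h2 : (c * s ^ ℓ).toWord <+: (c * s ^ N * c⁻¹).toWord := by
    refine prefix_toWord_mul_of_prefix h1 ?_
    -- `|c sˡ| + |c| ≤ 2l + l|s| ≤ 4l|s| - l ≤ N|s| - |c| ≤ |c s^N|`
    have := norm_mul_le c (s ^ ℓ)
    have := norm_mul_le c⁻¹ (c * s ^ N)
    simp only [norm, inv_mul_cancel_left, toWord_inv, invRev_length, hlen] at *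
    nlinarith
  obtain ⟨e, he, hce⟩ := hE _ hN _ h2
  rw [mk_toWord] at hce
  exact ⟨e, he, _, hce, -ℓ, by group⟩

theorem exists_finset_doubleCoset_reps {H : Subgroup (FreeGroup α)} (hH : H.FG)
    (y : FreeGroup α) :
    ∃ G₀ : Finset (FreeGroup α), ∀ g, H ⊓ Subgroup.zpowers (g * y * g⁻¹) ≠ ⊥ →
      ∃ g₀ ∈ G₀, ∃ h ∈ H, ∃ j : ℤ, g = h * g₀ * y ^ j := by
  obtain ⟨E, hE⟩ := exists_prefixCosetReps_of_fg hH
  set u := mk (reduceCyclically.conjugator y.toWord)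
  set s := mk (reduceCyclically y.toWord)
  have hy : y = u * s * u⁻¹ := by
    rw [inv_mk, mul_mk, mul_mk, reduceCyclically.conj_conjugator_reduceCyclically, mk_toWord]
  have hs : IsCyclicallyReduced s.toWord := by
    have := reduceCyclically.isCyclicallyReduced (isReduced_toWord (x := y))
    rwa [toWord_mk, this.isReduced.reduce_eq]
  refine ⟨E.image (· * u⁻¹), fun g hg => ?_⟩
  obtain ⟨z, hz, hz1⟩ := (Subgroup.bot_or_exists_ne_one _).resolve_left hg
  obtain ⟨hzH, hzy⟩ := Subgroup.mem_inf.mp hz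
  obtain ⟨k, rfl⟩ := Subgroup.mem_zpowers_iff.mp hzy
  have hk : k ≠ 0 := by
    rintro rfl
    exact hz1 (zpow_zero _)
  have hs1 : s ≠ 1 := by
    rintro hs1
    rw [hy, hs1] at hz1
    simp at hz1
  have hmem : (g * u) * s ^ k.natAbs * (g * u)⁻¹ ∈ H := by
    convert Subgroup.pow_natAbs_mem hzH using 1
    rw [hy, conj_pow, conj_pow]
    group
  obtain ⟨e, he, h, hh, j, hc⟩ :=
    exists_eq_mul_mul_zpow_of_conj_pow_mem hE hs hs1 (Int.natAbs_ne_zero.mpr hk) hmem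
  refine ⟨e * u⁻¹, Finset.mem_image_of_mem _ he, h, hh, j, ?_⟩
  calc g = g * u * u⁻¹ := by group
    _ = h * (e * u⁻¹) * (u * s ^ j * u⁻¹) := by rw [hc]; group
    _ = h * (e * u⁻¹) * y ^ j := by rw [hy, conj_zpow]

end FreeGroup

/-- If `w` is a finite multiword in a finitely generated free group `F` and `H` is a
finitely generated subgroup of `F`, then the pullback peripheral structure of `[w]`
(the set of maximal cyclic subgroups containing elements of `w`) to `H` consists of
finitely many `H`-conjugacy classes. -/
theorem stmt_4 {α : Type*} [Finite α] (w : Finset (FreeGroup α))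
    (hw : (1 : FreeGroup α) ∉ w)
    (H : Subgroup (FreeGroup α)) (hH : H.FG) :
    ∃ T : Finset (Subgroup (FreeGroup α)),
      ∀ D ∈ pullbackStruct ⊤ {C | IsMaxCyclicIn ⊤ C ∧ ∃ x ∈ w, x ∈ C} H,
        ∃ D' ∈ T, ∃ h ∈ H, conjSub h D = D' := by
  classical
  set L := w.sup FreeGroup.norm
  have hB : {y : FreeGroup α | y.norm ≤ L}.Finite :=
    (finite_length_le _ L).preimage FreeGroup.toWord_injective.injOn
  choose G₀ hG₀ using FreeGroup.exists_finset_doubleCoset_reps hH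
  have hT : (⋃ y ∈ {y : FreeGroup α | y.norm ≤ L},
      (fun g₀ => H ⊓ conjSub g₀ (Subgroup.zpowers y)) '' G₀ y).Finite :=
    hB.biUnion fun y _ => (G₀ y).finite_toSet.image _
  refine ⟨hT.toFinset, ?_⟩
  rintro D ⟨hD, C, ⟨⟨-, ⟨y, rfl⟩, -⟩, x, hxw, hxy⟩, g, -, rfl⟩
  obtain ⟨k, rfl⟩ := Subgroup.mem_zpowers_iff.mp hxy
  have hk : k ≠ 0 := by
    rintro rfl
    exact hw (by simpa using hxw)
  have hyL : y.norm ≤ L := (FreeGroup.norm_le_norm_zpow y hk).trans (Finset.le_sup hxw)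
  rw [conjSub_zpowers] at hD
  obtain ⟨g₀, hg₀, h, hh, j, rfl⟩ := hG₀ y g hD
  refine ⟨_, hT.mem_toFinset.mpr (Set.mem_biUnion hyL ⟨g₀, hg₀, rfl⟩), h⁻¹, H.inv_mem hh, ?_⟩
  exact conjSub_inv_inf_conjSub_mul_mul hh (Subgroup.zpow_mem_zpowers y j)
end

section
/- Let F be a free group and g ∈ F nontrivial. Then the centralizer of g in F is infinite cyclic. -/
/-!
By Nielsen–Schreier the centralizer of `g` is a free group, and `g` is a nontrivial central
element of it, so it suffices that a free group with nontrivial center has rank one. If `z` is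
central in `FreeGroup ι`, then for every letter `a` the subgroup generated by `z` and `of a` is free
and abelian, hence cyclic; as `of a` is not a proper power (its exponent sum at `a` is `1`), `z` is
a power of `of a`. Powers of two distinct letters meet trivially, so there is only one letter.
-/

open Subgroup

namespace FreeGroup

variable {ι : Type*}

theorem eq_of_commute_of_of {x y : ι} (h : Commute (of x) (of y)) : x = y := by
  classical
  -- `x y` and `y x` are both reduced words
  exact (by simpa [toWord_mul, reduce.cons] using congrArg toWord h.eq : x = y ∧ y = x).1

section ExponentSum

variable [DecidableEq ι]

noncomputable def exponentSum (a : ι) : FreeGroup ι →* Multiplicative ℤ :=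
  FreeGroup.lift (Pi.mulSingle a (Multiplicative.ofAdd 1))

@[simp]
theorem exponentSum_of_self (a : ι) : exponentSum a (of a) = Multiplicative.ofAdd 1 := by
  simp [exponentSum]

@[simp]
theorem exponentSum_of_of_ne {a b : ι} (h : b ≠ a) : exponentSum a (of b) = 1 := by
  simp [exponentSum, h]

end ExponentSum

theorem zpowers_eq_zpowers_of_of_mem {a : ι} {t : FreeGroup ι} (ha : of a ∈ zpowers t) :
    zpowers t = zpowers (of a) := by
  classical
  obtain ⟨n, hn⟩ := mem_zpowers_iff.mp ha
  have hn1 : n * Multiplicative.toAdd (exponentSum a t) = 1 := by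
    simpa using congrArg (Multiplicative.toAdd ∘ exponentSum a) hn
  rcases Int.eq_one_or_neg_one_of_mul_eq_one hn1 with rfl | rfl
  · simp [← hn]
  · simp [← hn]

theorem zpowers_of_inf_zpowers_of {a b : ι} (h : a ≠ b) :
    zpowers (of a) ⊓ zpowers (of b) = ⊥ := by
  classical
  refine eq_bot_iff.mpr fun x ⟨ha, hb⟩ => ?_
  obtain ⟨p, rfl⟩ := mem_zpowers_iff.mp ha
  obtain ⟨q, hq⟩ := mem_zpowers_iff.mp hb
  have : q = 0 := by simpa [h] using congrArg (Multiplicative.toAdd ∘ exponentSum b) hq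
  simp [← hq, this]

end FreeGroup

theorem IsFreeGroup.isCyclic_of_isMulCommutative {G : Type*} [Group G] [IsFreeGroup G]
    [IsMulCommutative G] : IsCyclic G := by
  obtain ⟨ι, ⟨b⟩⟩ := IsFreeGroup.nonempty_basis (G := G)
  have : Subsingleton ι := ⟨fun x y => FreeGroup.eq_of_commute_of_of <| by
    simpa [commute_iff_eq] using congrArg b.repr (mul_comm' (b x) (b y))⟩
  have : IsCyclic (FreeGroup ι) := by
    rcases isEmpty_or_nonempty ι with _ | ⟨i⟩
    · exact isCyclic_of_subsingleton
    · have : Unique ι := uniqueOfSubsingleton i.some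
      infer_instance
  exact isCyclic_of_surjective b.repr.symm b.repr.symm.surjective

namespace FreeGroup

variable {ι : Type*}

theorem mem_zpowers_of_of_commute {z : FreeGroup ι} {a : ι} (h : Commute z (of a)) :
    z ∈ zpowers (of a) := by
  set H := closure {z, of a}
  have : IsMulCommutative H := isMulCommutative_closure <| by
    rintro x (rfl | rfl) y (rfl | rfl)
    exacts [rfl, h.eq, h.symm.eq, rfl]
  obtain ⟨t, ht⟩ := (IsFreeGroup.isCyclic_of_isMulCommutative (G := H)).exists_generator
  have hgen : ∀ x ∈ H, x ∈ zpowers (t : FreeGroup ι) := fun x hx => by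
    obtain ⟨k, hk⟩ := mem_zpowers_iff.mp (ht ⟨x, hx⟩)
    exact mem_zpowers_iff.mpr ⟨k, by simpa using congrArg Subtype.val hk⟩
  rw [← zpowers_eq_zpowers_of_of_mem (hgen _ (subset_closure (by simp)))]
  exact hgen z (subset_closure (by simp))

theorem subsingleton_of_mem_center {z : FreeGroup ι} (hz : z ∈ center (FreeGroup ι))
    (hz1 : z ≠ 1) : Subsingleton ι := by
  refine ⟨fun a b => by_contra fun hab => hz1 ?_⟩
  have hza (c : ι) : z ∈ zpowers (of c) := mem_zpowers_of_of_commute (mem_center_iff.mp hz _).symm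
  simpa [zpowers_of_inf_zpowers_of hab] using mem_inf.mpr ⟨hza a, hza b⟩

end FreeGroup

theorem IsFreeGroup.nonempty_mulEquiv_int_of_mem_center {G : Type*} [Group G] [IsFreeGroup G]
    {z : G} (hz : z ∈ center G) (hz1 : z ≠ 1) : Nonempty (G ≃* Multiplicative ℤ) := by
  obtain ⟨ι, ⟨b⟩⟩ := IsFreeGroup.nonempty_basis (G := G)
  have hz' : b.repr z ∈ center (FreeGroup ι) := mem_center_iff.mpr <| b.repr.surjective.forall.mpr
    fun w => by rw [← _root_.map_mul, ← _root_.map_mul, mem_center_iff.mp hz]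
  have hz1' : b.repr z ≠ 1 := by simpa using hz1
  have : Subsingleton ι := FreeGroup.subsingleton_of_mem_center hz' hz1'
  have : Nonempty ι := not_isEmpty_iff.mp fun _ => hz1' (Subsingleton.elim _ _)
  have : Unique ι := uniqueOfSubsingleton (Classical.arbitrary ι)
  exact ⟨b.repr.trans FreeGroup.mulEquivIntOfUnique⟩

/-- Let `F` be a free group and `g ∈ F` nontrivial.  Then the centralizer of `g`
in `F` is infinite cyclic. -/
theorem stmt_7 {α : Type*} (g : FreeGroup α) (hg : g ≠ 1) :
    Nonempty (Subgroup.centralizer ({g} : Set (FreeGroup α)) ≃* Multiplicative ℤ) := by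
  have hgC : g ∈ centralizer {g} := mem_centralizer_singleton_iff.mpr rfl
  refine IsFreeGroup.nonempty_mulEquiv_int_of_mem_center (z := ⟨g, hgC⟩) ?_ (by simpa using hg)
  exact mem_center_iff.mpr fun h => Subtype.ext (mem_centralizer_singleton_iff.mp h.2)
end

section
/- Let F₂ = ⟨x, y⟩ be the free group of rank 2. Let F₃ = ⟨a, b, c⟩ embed in F₂ via a ↦ x, b ↦ yxy⁻¹, c ↦ y²xy⁻². Then F₂ is an HNN extension of F₃ with stable letter y conjugating ⟨a, b⟩ to ⟨b, c⟩; yet F₃ admits no free product decomposition F₃ = P * Q with P, Q nontrivial such that ⟨a,b⟩ is conjugate into P or Q and ⟨b,c⟩ is conjugate into P or Q. -/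
namespace Stmt12

/-- `F₃ = ⟨a, b, c⟩`. -/
abbrev F₃ := FreeGroup (Fin 3)
/-- `F₂ = ⟨x, y⟩`. -/
abbrev F₂ := FreeGroup Bool

noncomputable def a : F₃ := FreeGroup.of 0
noncomputable def b : F₃ := FreeGroup.of 1
noncomputable def c : F₃ := FreeGroup.of 2
noncomputable def x : F₂ := FreeGroup.of false
noncomputable def y : F₂ := FreeGroup.of true

/-- `A = ⟨a, b⟩ ≤ F₃`. -/
noncomputable def A : Subgroup F₃ := Subgroup.closure {a, b}
/-- `B = ⟨b, c⟩ ≤ F₃`. -/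
noncomputable def B : Subgroup F₃ := Subgroup.closure {b, c}

theorem ha : a ∈ A := Subgroup.subset_closure (by simp)
theorem hb : b ∈ A := Subgroup.subset_closure (by simp)

end Stmt12

theorem le_normalClosure_of_conjSub_le {G : Type*} [Group G] {g : G} {C H : Subgroup G}
    (h : conjSub g C ≤ H) : C ≤ Subgroup.normalClosure H := by
  intro u hu
  have hconj : g * u * g⁻¹ ∈ Subgroup.normalClosure H :=
    Subgroup.le_normalClosure (h ⟨u, hu, rfl⟩)
  simpa [mul_assoc] using (Subgroup.normalClosure_normal (s := (H : Set G))).conj_mem _ hconj g⁻¹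

section InternalFreeProduct

open Monoid

variable {G : Type*} [Group G] {P Q : Subgroup G}

abbrev IsInternalFreeProduct (P Q : Subgroup G) : Prop :=
  Function.Bijective (Coprod.lift P.subtype Q.subtype)

theorem isInternalFreeProduct_of_injective_of_sup_eq_top
    (hinj : Function.Injective (Coprod.lift P.subtype Q.subtype)) (hsup : P ⊔ Q = ⊤) :
    IsInternalFreeProduct P Q := by
  refine ⟨hinj, ?_⟩
  rw [← MonoidHom.range_eq_top, eq_top_iff, ← hsup, sup_le_iff]
  exact ⟨fun p hp ↦ ⟨Coprod.inl ⟨p, hp⟩, by simp⟩, fun q hq ↦ ⟨Coprod.inr ⟨q, hq⟩, by simp⟩⟩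

namespace IsInternalFreeProduct

noncomputable def mulEquiv (h : IsInternalFreeProduct P Q) : Coprod P Q ≃* G :=
  MulEquiv.ofBijective _ h

noncomputable def retractionLeft (h : IsInternalFreeProduct P Q) : G →* G :=
  (Coprod.lift P.subtype 1).comp h.mulEquiv.symm.toMonoidHom

noncomputable def retractionRight (h : IsInternalFreeProduct P Q) : G →* G :=
  (Coprod.lift 1 Q.subtype).comp h.mulEquiv.symm.toMonoidHom

variable {h : IsInternalFreeProduct P Q}

theorem mulEquiv_symm_of_mem_left {p : G} (hp : p ∈ P) :
    h.mulEquiv.symm p = Coprod.inl ⟨p, hp⟩ := by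
  rw [MulEquiv.symm_apply_eq]; simp [mulEquiv]

theorem mulEquiv_symm_of_mem_right {q : G} (hq : q ∈ Q) :
    h.mulEquiv.symm q = Coprod.inr ⟨q, hq⟩ := by
  rw [MulEquiv.symm_apply_eq]; simp [mulEquiv]

theorem retractionLeft_of_mem_left {p : G} (hp : p ∈ P) : h.retractionLeft p = p := by
  simp [retractionLeft, mulEquiv_symm_of_mem_left hp]

theorem retractionLeft_of_mem_right {q : G} (hq : q ∈ Q) : h.retractionLeft q = 1 := by
  simp [retractionLeft, mulEquiv_symm_of_mem_right hq]

theorem retractionRight_of_mem_left {p : G} (hp : p ∈ P) : h.retractionRight p = 1 := by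
  simp [retractionRight, mulEquiv_symm_of_mem_left hp]

theorem retractionRight_of_mem_right {q : G} (hq : q ∈ Q) : h.retractionRight q = q := by
  simp [retractionRight, mulEquiv_symm_of_mem_right hq]

theorem right_eq_bot_of_normalClosure_left_eq_top (h : IsInternalFreeProduct P Q)
    (hP : Subgroup.normalClosure (P : Set G) = ⊤) : Q = ⊥ := by
  have hker : Subgroup.normalClosure (P : Set G) ≤ h.retractionRight.ker :=
    Subgroup.normalClosure_le_normal fun _ hp ↦ retractionRight_of_mem_left hp
  refine (Subgroup.eq_bot_iff_forall _).mpr fun q hq ↦ ?_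
  rw [← retractionRight_of_mem_right (h := h) hq]
  exact hker (hP ▸ Subgroup.mem_top q)

theorem left_eq_bot_of_normalClosure_right_eq_top (h : IsInternalFreeProduct P Q)
    (hQ : Subgroup.normalClosure (Q : Set G) = ⊤) : P = ⊥ := by
  have hker : Subgroup.normalClosure (Q : Set G) ≤ h.retractionLeft.ker :=
    Subgroup.normalClosure_le_normal fun _ hq ↦ retractionLeft_of_mem_right hq
  refine (Subgroup.eq_bot_iff_forall _).mpr fun p hp ↦ ?_
  rw [← retractionLeft_of_mem_left (h := h) hp]
  exact hker (hQ ▸ Subgroup.mem_top p)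

theorem map_eq_one_of_mem_normalClosure_left_of_mem_normalClosure_right
    (h : IsInternalFreeProduct P Q) {M : Type*} [CommGroup M] (s : G →* M) {u : G}
    (hP : u ∈ Subgroup.normalClosure (P : Set G))
    (hQ : u ∈ Subgroup.normalClosure (Q : Set G)) : s u = 1 := by
  have hsplit : s = s.comp h.retractionLeft * s.comp h.retractionRight := by
    refine (MonoidHom.cancel_right h.2).mp (Coprod.hom_ext ?_ ?_) <;> ext ⟨g, hg⟩ <;>
      simp [retractionLeft_of_mem_left, retractionLeft_of_mem_right,
        retractionRight_of_mem_left, retractionRight_of_mem_right, hg]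
  have hL : h.retractionLeft u = 1 :=
    Subgroup.normalClosure_le_normal (N := h.retractionLeft.ker)
      (fun _ hq ↦ retractionLeft_of_mem_right hq) hQ
  have hR : h.retractionRight u = 1 :=
    Subgroup.normalClosure_le_normal (N := h.retractionRight.ker)
      (fun _ hp ↦ retractionRight_of_mem_left hp) hP
  rw [hsplit]
  simp [hL, hR]

end IsInternalFreeProduct

end InternalFreeProduct

namespace Stmt12

noncomputable def rotate : F₃ ≃* F₃ := FreeGroup.freeGroupCongr (finRotate 3)

theorem rotate_a : rotate a = b := by simp [rotate, a, b]

theorem rotate_b : rotate b = c := by simp [rotate, b, c]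

theorem map_rotate_A : A.map rotate.toMonoidHom = B := by
  rw [A, MonoidHom.map_closure, Set.image_insert_eq, Set.image_singleton]
  simp only [MulEquiv.coe_toMonoidHom, rotate_a, rotate_b, B]

noncomputable def φ : A ≃* B := (rotate.subgroupMap A).trans (MulEquiv.subgroupCongr map_rotate_A)

theorem coe_φ (u : A) : (φ u : F₃) = rotate u := rfl

noncomputable def embed : F₃ →* F₂ := FreeGroup.lift ![x, y * x * y⁻¹, y * y * x * y⁻¹ * y⁻¹]

theorem embed_a : embed a = x := by simp [embed, a]

theorem embed_b : embed b = y * x * y⁻¹ := by simp [embed, b]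

theorem embed_c : embed c = y * y * x * y⁻¹ * y⁻¹ := by simp [embed, c]

theorem y_mul_embed (u : A) : y * embed u = embed (φ u) * y := by
  have hconj : Set.EqOn ((MulAut.conj y).toMonoidHom.comp embed) (embed.comp rotate.toMonoidHom)
      (A : Set F₃) :=
    MonoidHom.eqOn_closure <| by
      rintro _ (rfl | rfl)
      · simp [rotate_a, embed_a, embed_b]
      · simp only [MulEquiv.toMonoidHom_eq_coe, MonoidHom.coe_comp, MonoidHom.coe_coe,
          Function.comp_apply, MulAut.conj_apply, rotate_b, embed_b, embed_c, mul_left_inj]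
        group
  have hu : y * embed u * y⁻¹ = embed (rotate u) := by simpa using hconj u.2
  rw [coe_φ, ← hu]
  group

noncomputable def toF₂ : HNNExtension F₃ A B φ →* F₂ := HNNExtension.lift embed y y_mul_embed

noncomputable def ofF₂ : F₂ →* HNNExtension F₃ A B φ :=
  FreeGroup.lift fun i ↦ cond i HNNExtension.t (HNNExtension.of a)

theorem t_conj_of_a : HNNExtension.t * HNNExtension.of a * HNNExtension.t⁻¹ =
    (HNNExtension.of b : HNNExtension F₃ A B φ) := by
  rw [← rotate_a, ← coe_φ ⟨a, ha⟩, HNNExtension.equiv_eq_conj]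

theorem t_conj_of_b : HNNExtension.t * HNNExtension.of b * HNNExtension.t⁻¹ =
    (HNNExtension.of c : HNNExtension F₃ A B φ) := by
  rw [← rotate_b, ← coe_φ ⟨b, hb⟩, HNNExtension.equiv_eq_conj]

theorem toF₂_of (u : F₃) : toF₂ (HNNExtension.of u) = embed u := HNNExtension.lift_of ..

theorem toF₂_t : toF₂ HNNExtension.t = y := HNNExtension.lift_t ..

theorem ofF₂_x : ofF₂ x = HNNExtension.of a := by simp [ofF₂, x]

theorem ofF₂_y : ofF₂ y = HNNExtension.t := by simp [ofF₂, y]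

theorem ofF₂_comp_toF₂ : ofF₂.comp toF₂ = MonoidHom.id _ := by
  refine HNNExtension.hom_ext (FreeGroup.ext_hom _ _ fun i ↦ ?_) (by simp [toF₂_t, ofF₂_y])
  fin_cases i
  · show ofF₂ (toF₂ (HNNExtension.of a)) = HNNExtension.of a
    rw [toF₂_of, embed_a, ofF₂_x]
  · show ofF₂ (toF₂ (HNNExtension.of b)) = HNNExtension.of b
    rw [toF₂_of, embed_b, ← t_conj_of_a]
    simp [ofF₂_x, ofF₂_y]
  · show ofF₂ (toF₂ (HNNExtension.of c)) = HNNExtension.of c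
    rw [toF₂_of, embed_c, ← t_conj_of_b, ← t_conj_of_a]
    simp [ofF₂_x, ofF₂_y, mul_assoc]

theorem toF₂_comp_ofF₂ : toF₂.comp ofF₂ = MonoidHom.id _ :=
  FreeGroup.ext_hom _ _ fun i ↦ by cases i <;> simp [toF₂_of, toF₂_t, ofF₂, embed_a, x, y]

noncomputable def hnnEquiv : HNNExtension F₃ A B φ ≃* F₂ :=
  toF₂.toMulEquiv ofF₂ ofF₂_comp_toF₂ toF₂_comp_ofF₂

theorem A_sup_B_eq_top : A ⊔ B = ⊤ := by
  rw [eq_top_iff, ← FreeGroup.closure_range_of, Subgroup.closure_le]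
  rintro _ ⟨i, rfl⟩
  fin_cases i
  · exact Subgroup.mem_sup_left (Subgroup.subset_closure (by simp [a]))
  · exact Subgroup.mem_sup_left (Subgroup.subset_closure (by simp [b]))
  · exact Subgroup.mem_sup_right (Subgroup.subset_closure (by simp [c]))

theorem normalClosure_eq_top_of_conjSub_le {H : Subgroup F₃} {g h : F₃}
    (hA : conjSub g A ≤ H) (hB : conjSub h B ≤ H) : Subgroup.normalClosure (H : Set F₃) = ⊤ :=
  top_unique <| A_sup_B_eq_top ▸
    sup_le (le_normalClosure_of_conjSub_le hA) (le_normalClosure_of_conjSub_le hB)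

theorem b_mem_B : b ∈ B := Subgroup.subset_closure (by simp)

theorem exists_map_b_ne_one : ∃ s : F₃ →* Multiplicative ℤ, s b ≠ 1 :=
  ⟨FreeGroup.lift (Pi.mulSingle 1 (Multiplicative.ofAdd 1)), by simp [b]⟩

theorem stmt_12 :
    (∃ φ : A ≃* B, ((φ ⟨a, ha⟩ : F₃) = b) ∧ ((φ ⟨b, hb⟩ : F₃) = c) ∧
      ∃ ψ : HNNExtension F₃ A B φ ≃* F₂,
        ψ (HNNExtension.of a) = x ∧
        ψ (HNNExtension.of b) = y * x * y⁻¹ ∧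
        ψ (HNNExtension.of c) = y * y * x * y⁻¹ * y⁻¹ ∧
        ψ HNNExtension.t = y) ∧
    ¬ ∃ P Q : Subgroup F₃, P ≠ ⊥ ∧ Q ≠ ⊥ ∧
        Function.Injective (Monoid.Coprod.lift P.subtype Q.subtype) ∧ P ⊔ Q = ⊤ ∧
        (∃ g : F₃, conjSub g A ≤ P ∨ conjSub g A ≤ Q) ∧
        (∃ g : F₃, conjSub g B ≤ P ∨ conjSub g B ≤ Q) := by
  refine ⟨⟨φ, rotate_a, rotate_b, hnnEquiv, ?_⟩, ?_⟩
  · exact ⟨(toF₂_of a).trans embed_a, (toF₂_of b).trans embed_b, (toF₂_of c).trans embed_c,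
      toF₂_t⟩
  rintro ⟨P, Q, hP, hQ, hinj, hsup, hA, hB⟩
  have hPQ := isInternalFreeProduct_of_injective_of_sup_eq_top hinj hsup
  obtain ⟨s, hs⟩ := exists_map_b_ne_one
  rcases hA with ⟨g, hgA | hgA⟩ <;> rcases hB with ⟨h, hhB | hhB⟩
  · exact hQ (hPQ.right_eq_bot_of_normalClosure_left_eq_top
      (normalClosure_eq_top_of_conjSub_le hgA hhB))
  · exact hs (hPQ.map_eq_one_of_mem_normalClosure_left_of_mem_normalClosure_right s
      (le_normalClosure_of_conjSub_le hgA hb) (le_normalClosure_of_conjSub_le hhB b_mem_B))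
  · exact hs (hPQ.map_eq_one_of_mem_normalClosure_left_of_mem_normalClosure_right s
      (le_normalClosure_of_conjSub_le hhB b_mem_B) (le_normalClosure_of_conjSub_le hgA hb))
  · exact hP (hPQ.left_eq_bot_of_normalClosure_right_eq_top
      (normalClosure_eq_top_of_conjSub_le hgA hhB))

end Stmt12
end
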